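/- In the simplicial 3-ball of Example 3.2, the edge {1,2} is a strict spanning edge, while the edges {3,6}, {4,7}, {5,8} are spanning edges that are not strict. -/
import Mathlib


namespace SCPaper

/-- An abstract simplicial complex on vertex type `V`. -/
structure SComplex (V : Type) where
  faces : Set (Finset V)
  nonempty_mem : ∀ s ∈ faces, s.Nonempty
  down_closed : ∀ s ∈ faces, ∀ t ⊆ s, t.Nonempty → t ∈ faces

variable {V : Type} [DecidableEq V]

/-- The geometric realization of a simplicial complex, as a subspace of `V → ℝ`. -/
def geomRealization (K : SComplex V) : Set (V → ℝ) :=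
  {f | ∃ s ∈ K.faces, (∀ v, 0 ≤ f v) ∧ (∀ v ∉ s, f v = 0) ∧ s.sum f = 1}

/-- `K` is a simplicial `d`-ball: its realization is homeomorphic to a closed `d`-ball. -/
def IsBall (d : ℕ) (K : SComplex V) : Prop :=
  Nonempty ((geomRealization K) ≃ₜ (Metric.closedBall (0 : EuclideanSpace ℝ (Fin d)) 1))

/-- The vertex set of a complex. -/
def vertexSet (K : SComplex V) : Set V := {v | {v} ∈ K.faces}

/-- The facets (maximal faces) of a complex. -/
def facets (K : SComplex V) : Set (Finset V) :=
  {s | s ∈ K.faces ∧ ∀ t ∈ K.faces, s ⊆ t → s = t}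

/-- A complex is pure of dimension `d`. -/
def IsPure (d : ℕ) (K : SComplex V) : Prop :=
  (∀ s ∈ K.faces, s.card ≤ d + 1) ∧ ∀ s ∈ K.faces, ∃ t ∈ K.faces, s ⊆ t ∧ t.card = d + 1

/-- A complex has dimension `n`. -/
def HasDim (n : ℕ) (K : SComplex V) : Prop :=
  (∀ s ∈ K.faces, s.card ≤ n + 1) ∧ ∃ s ∈ K.faces, s.card = n + 1

/-- The full simplex on a vertex set `s`. -/
def simplexOn (s : Finset V) : SComplex V where
  faces := {t | t ⊆ s ∧ t.Nonempty}
  nonempty_mem := fun t ht => ht.2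
  down_closed := fun a ha t ht hne => ⟨ht.trans ha.1, hne⟩

/-- Intersection of two complexes. -/
def interC (K L : SComplex V) : SComplex V where
  faces := K.faces ∩ L.faces
  nonempty_mem := fun s hs => K.nonempty_mem s hs.1
  down_closed := fun s hs t ht hne =>
    ⟨K.down_closed s hs.1 t ht hne, L.down_closed s hs.2 t ht hne⟩

/-- The boundary complex of a pure `d`-dimensional ball-like complex: it is generated by the
`(d-1)`-dimensional faces (of cardinality `d`) contained in exactly one facet. -/
def boundaryC (d : ℕ) (K : SComplex V) : SComplex V where
  faces := {t | t.Nonempty ∧ ∃ s ∈ K.faces, t ⊆ s ∧ s.card = d ∧ ∃! F, F ∈ facets K ∧ s ⊆ F}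
  nonempty_mem := fun s hs => hs.1
  down_closed := by
    rintro s ⟨-, u, hu, hsu, hcard, hF⟩ t ht hne
    exact ⟨hne, u, hu, ht.trans hsu, hcard, hF⟩

/-- The closed star `Star_K I`: all faces of `K` contained in a face meeting a vertex of `I`. -/
def starC (K I : SComplex V) : SComplex V where
  faces := {t | t ∈ K.faces ∧ ∃ s ∈ K.faces, t ⊆ s ∧ ∃ v ∈ s, {v} ∈ I.faces}
  nonempty_mem := fun s hs => K.nonempty_mem s hs.1
  down_closed := by
    rintro s ⟨hsK, u, hu, hsu, hv⟩ t ht hne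
    exact ⟨K.down_closed s hsK t ht hne, u, hu, ht.trans hsu, hv⟩

/-- The maximal (full) subcomplex of `K` on a vertex set `S`. -/
def fullSub (K : SComplex V) (S : Set V) : SComplex V where
  faces := {t | t ∈ K.faces ∧ ∀ v ∈ t, v ∈ S}
  nonempty_mem := fun s hs => K.nonempty_mem s hs.1
  down_closed := fun s hs t ht hne =>
    ⟨K.down_closed s hs.1 t ht hne, fun v hv => hs.2 v (ht hv)⟩

/-- The closure of the complement of a subcomplex `L` in `K`: the subcomplex generated by
the faces of `K` not in `L`. -/
def compClosure (K L : SComplex V) : SComplex V where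
  faces := {t | t.Nonempty ∧ ∃ s ∈ K.faces, s ∉ L.faces ∧ t ⊆ s}
  nonempty_mem := fun s hs => hs.1
  down_closed := by
    rintro s ⟨-, u, hu, huL, hsu⟩ t ht hne
    exact ⟨hne, u, hu, huL, ht.trans hsu⟩

/-- Two vertices are connected by an edge path in `K`. -/
def Reach (K : SComplex V) : V → V → Prop :=
  Relation.ReflTransGen (fun a b => ({a, b} : Finset V) ∈ K.faces)

/-- A complex is connected (as a 1-skeleton graph, nonempty). -/
def IsConnectedC (K : SComplex V) : Prop :=
  (∃ v, v ∈ vertexSet K) ∧ ∀ u v, u ∈ vertexSet K → v ∈ vertexSet K → Reach K u v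

/-- The connected component of the vertex `v` in `K`. -/
def componentOf (K : SComplex V) (v : V) : SComplex V where
  faces := {t | t ∈ K.faces ∧ ∀ u ∈ t, Reach K v u}
  nonempty_mem := fun s hs => K.nonempty_mem s hs.1
  down_closed := fun s hs t ht hne =>
    ⟨K.down_closed s hs.1 t ht hne, fun u hu => hs.2 u (ht hu)⟩

/-- `C` is a connected component of `K`. -/
def IsComponentOf (K C : SComplex V) : Prop :=
  ∃ v, {v} ∈ K.faces ∧ C = componentOf K v

/-- An interior vertex of a `3`-ball `B`: a vertex not on the boundary. -/
def IsInteriorVertex (B : SComplex V) (v : V) : Prop :=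
  {v} ∈ B.faces ∧ {v} ∉ (boundaryC 3 B).faces

/-- The interior graph of a `3`-ball: interior vertices and interior edges. -/
def interiorGraph (B : SComplex V) : SComplex V where
  faces := {t | t ∈ B.faces ∧ t.card ≤ 2 ∧ ∀ v ∈ t, IsInteriorVertex B v}
  nonempty_mem := fun s hs => B.nonempty_mem s hs.1
  down_closed := fun s hs t ht hne =>
    ⟨B.down_closed s hs.1 t ht hne, le_trans (Finset.card_le_card ht) hs.2.1,
      fun v hv => hs.2.2 v (ht hv)⟩

/-- A maximal interior graph component of a `3`-ball. -/
def IsMaxIntComp (B I : SComplex V) : Prop :=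
  IsComponentOf (interiorGraph B) I

/-- A spanning edge of a `3`-ball: an edge not on the boundary with both endpoints on it. -/
def IsSpanningEdge (B : SComplex V) (e : Finset V) : Prop :=
  e ∈ B.faces ∧ e.card = 2 ∧ e ∉ (boundaryC 3 B).faces ∧
    ∀ v ∈ e, {v} ∈ (boundaryC 3 B).faces

/-- A spanning edge `e` is strict if there is no maximal interior graph component `I` such that
both endpoints of `e` lie in exactly one connected component of `∂B ∩ Star_B I`. -/
def IsStrictSpanningEdge (B : SComplex V) (e : Finset V) : Prop :=
  IsSpanningEdge B e ∧
    ¬ ∃ I, IsMaxIntComp B I ∧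
      ∃! C, IsComponentOf (interC (boundaryC 3 B) (starC B I)) C ∧ ∀ v ∈ e, {v} ∈ C.faces

/-- A `3`-ball is reduced: every interior `2`-face has at most one boundary edge. -/
def IsReduced (B : SComplex V) : Prop :=
  ∀ s ∈ B.faces, s.card = 3 → s ∉ (boundaryC 3 B).faces →
    ({e : Finset V | e ⊆ s ∧ e.card = 2 ∧ e ∈ (boundaryC 3 B).faces}).Subsingleton

/-- Constructibility of pure `d`-dimensional simplicial complexes. -/
inductive Constructible : ℕ → SComplex V → Prop
  | simplex (d : ℕ) (K : SComplex V) (s : Finset V) (hcard : s.card = d + 1)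
      (hK : K.faces = {t | t ⊆ s ∧ t.Nonempty}) : Constructible d K
  | union (d : ℕ) (K C₁ C₂ : SComplex V)
      (h₁ : C₁.faces ⊆ K.faces) (h₂ : C₂.faces ⊆ K.faces)
      (hp₁ : IsPure d C₁) (hp₂ : IsPure d C₂)
      (hu : K.faces = C₁.faces ∪ C₂.faces)
      (hdim : HasDim (d - 1) (interC C₁ C₂))
      (hc₁ : Constructible d C₁) (hc₂ : Constructible d C₂)
      (hci : Constructible (d - 1) (interC C₁ C₂)) : Constructible d K

/-- Shellability of a pure `d`-dimensional complex. -/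
def Shellable (d : ℕ) (K : SComplex V) : Prop :=
  ∃ (t : ℕ) (F : Fin t → Finset V),
    0 < t ∧ Function.Injective F ∧
    (∀ i, F i ∈ K.faces ∧ (F i).card = d + 1) ∧
    (∀ s, s ∈ K.faces ↔ s.Nonempty ∧ ∃ i, s ⊆ F i) ∧
    ∀ k : Fin t, 0 < (k : ℕ) →
      (∃ s : Finset V, s.Nonempty ∧ s ⊆ F k ∧ ∃ j, j < k ∧ s ⊆ F j) ∧
      ∀ s : Finset V, (s.Nonempty ∧ s ⊆ F k ∧ ∃ j, j < k ∧ s ⊆ F j) →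
        ∃ u : Finset V, s ⊆ u ∧ u.card = d ∧ u ⊆ F k ∧ ∃ j, j < k ∧ u ⊆ F j

/-- A witness for a construction (deconstruction) of a constructible complex. -/
inductive ConstructionOf (d : ℕ) : SComplex V → Type
  | simplex (K : SComplex V) (s : Finset V) (hcard : s.card = d + 1)
      (hK : K.faces = {t | t ⊆ s ∧ t.Nonempty}) : ConstructionOf d K
  | union (K C₁ C₂ : SComplex V)
      (h₁ : C₁.faces ⊆ K.faces) (h₂ : C₂.faces ⊆ K.faces)
      (hp₁ : IsPure d C₁) (hp₂ : IsPure d C₂)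
      (hu : K.faces = C₁.faces ∪ C₂.faces)
      (hdim : HasDim (d - 1) (interC C₁ C₂))
      (hci : Constructible (d - 1) (interC C₁ C₂))
      (t₁ : ConstructionOf d C₁) (t₂ : ConstructionOf d C₂) : ConstructionOf d K

/-- The decomposition steps `(B', B'₁, B'₂)` occurring in a construction. -/
def ConstructionOf.nodes {d : ℕ} :
    {K : SComplex V} → ConstructionOf d K → Set (SComplex V × SComplex V × SComplex V)
  | _, .simplex _ _ _ _ => ∅
  | _, .union K C₁ C₂ _ _ _ _ _ _ _ t₁ t₂ => insert (K, C₁, C₂) (t₁.nodes ∪ t₂.nodes)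

/-- The 36 facets of the 3-ball of Example 3.2. -/
def exFacets : List (Finset ℕ) :=
  [{1,2,6,7}, {1,2,7,8}, {1,2,6,8}, {1,3,5,8}, {1,3,6,8}, {1,3,4,6}, {1,4,6,7}, {1,4,5,7},
   {1,5,7,8}, {5,8,9,11}, {3,5,8,9}, {3,6,8,9}, {3,6,9,10}, {3,4,6,10}, {4,6,7,10},
   {4,7,10,11}, {4,5,7,11}, {5,7,8,11}, {3,4,10,13}, {3,10,12,13}, {3,9,10,12}, {3,5,9,12},
   {5,9,12,14}, {5,9,11,14}, {4,5,11,14}, {4,11,13,14}, {4,10,11,13}, {6,7,10,13},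
   {6,10,12,13}, {6,9,10,12}, {6,8,9,12}, {8,9,12,14}, {8,9,11,14}, {7,8,11,14},
   {7,11,13,14}, {7,10,11,13}]

/-- The simplicial 3-ball of Example 3.2. -/
def exComplex : SComplex ℕ where
  faces := {t | t.Nonempty ∧ ∃ s ∈ exFacets, t ⊆ s}
  nonempty_mem := fun s hs => hs.1
  down_closed := by
    rintro s ⟨-, u, hu, hsu⟩ t ht hne
    exact ⟨hne, u, hu, ht.trans hsu⟩

/-! ### Auxiliary material for Example 3.2 -/

section Aux

theorem SComplex.ext' {K L : SComplex V} (h : K.faces = L.faces) : K = L := by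
  cases K; cases L; cases h; rfl

theorem reach_symm {K : SComplex V} {a b : V} (h : Reach K a b) : Reach K b a := by
  induction h with
  | refl => exact Relation.ReflTransGen.refl
  | tail _ h₂ ih => exact Relation.ReflTransGen.head (by rwa [Finset.pair_comm]) ih

theorem componentOf_congr {K : SComplex V} {a b : V} (h : Reach K a b) :
    componentOf K a = componentOf K b := by
  apply SComplex.ext'
  ext t
  simp only [componentOf, Set.mem_setOf_eq]
  refine and_congr_right fun _ => ⟨fun H u hu => ?_, fun H u hu => h.trans (H u hu)⟩
  exact (reach_symm h).trans (H u hu)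

/-- The 18 boundary triangles of the example. -/
def bdryTris : List (Finset ℕ) :=
  [{1,3,4},{1,3,5},{1,4,5},{2,6,7},{2,6,8},{2,7,8},{3,4,13},{3,5,12},{3,12,13},
   {4,5,14},{4,13,14},{5,12,14},{6,7,13},{6,8,12},{6,12,13},{7,8,14},{7,13,14},{8,12,14}]

theorem mem_faces_iff (t : Finset ℕ) :
    t ∈ exComplex.faces ↔ t.Nonempty ∧ ∃ s ∈ exFacets, t ⊆ s := Iff.rfl

theorem facets_char (F : Finset ℕ) : F ∈ facets exComplex ↔ F ∈ exFacets := by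
  have Dne : ∀ G ∈ exFacets, G.Nonempty := by decide
  have Dmax : ∀ F ∈ exFacets, ∀ G ∈ exFacets, F ⊆ G → F = G := by decide
  constructor
  · rintro ⟨⟨hne, G, hG, hFG⟩, hmax⟩
    have hGB : G ∈ exComplex.faces := ⟨Dne G hG, G, hG, Finset.Subset.refl G⟩
    rw [hmax G hGB hFG]; exact hG
  · intro hF
    refine ⟨⟨Dne F hF, F, hF, Finset.Subset.refl F⟩, ?_⟩
    rintro t ⟨-, G, hG, htG⟩ hFt
    have hFG : F = G := Dmax F hF G hG (hFt.trans htG)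
    exact Finset.Subset.antisymm hFt (hFG ▸ htG)

theorem bdry_iff (t : Finset ℕ) :
    t ∈ (boundaryC 3 exComplex).faces ↔ t.Nonempty ∧ ∃ s ∈ bdryTris, t ⊆ s := by
  constructor
  · rintro ⟨hne, s, hsB, hts, hcard, G, ⟨hGfac, hsG⟩, huniq⟩
    refine ⟨hne, s, ?_, hts⟩
    have hGex : G ∈ exFacets := (facets_char G).mp hGfac
    have hs3 : s ∈ Finset.powersetCard 3 G := Finset.mem_powersetCard.mpr ⟨hsG, hcard⟩
    have hUL : ∀ F' ∈ exFacets, s ⊆ F' → F' = G :=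
      fun F' hF' hsF' => huniq F' ⟨(facets_char F').mpr hF', hsF'⟩
    have D1 : ∀ G ∈ exFacets, ∀ s ∈ Finset.powersetCard 3 G,
        (∀ F' ∈ exFacets, s ⊆ F' → F' = G) → s ∈ bdryTris := by decide
    exact D1 G hGex s hs3 hUL
  · rintro ⟨hne, s, hs, hts⟩
    have D2 : ∀ s ∈ bdryTris,
        s.card = 3 ∧ ∃ F ∈ exFacets, s ⊆ F ∧ ∀ F' ∈ exFacets, s ⊆ F' → F' = F := by decide
    obtain ⟨hc3, F, hF, hsF, huniq⟩ := D2 s hs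
    have hsB : s ∈ exComplex.faces := ⟨Finset.card_pos.mp (by omega), F, hF, hsF⟩
    refine ⟨hne, s, hsB, hts, hc3, F, ⟨(facets_char F).mpr hF, hsF⟩, ?_⟩
    rintro F' ⟨hF'fac, hsF'⟩
    exact huniq F' ((facets_char F').mp hF'fac) hsF'

theorem intVert_mem {u : ℕ} (h : IsInteriorVertex exComplex u) :
    u = 9 ∨ u = 10 ∨ u = 11 := by
  obtain ⟨hmem, hnb⟩ := h
  rw [bdry_iff] at hnb
  obtain ⟨-, F, hF, huF⟩ := (mem_faces_iff _).mp hmem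
  have hu : u ∈ F := huF (Finset.mem_singleton_self u)
  have D : ∀ F ∈ exFacets, ∀ u ∈ F, (u = 9 ∨ u = 10 ∨ u = 11) ∨
      (({u} : Finset ℕ).Nonempty ∧ ∃ s ∈ bdryTris, ({u} : Finset ℕ) ⊆ s) := by decide
  rcases D F hF u hu with h' | h'
  · exact h'
  · exact absurd h' hnb

theorem int9 : IsInteriorVertex exComplex 9 :=
  ⟨(mem_faces_iff _).mpr (by decide), by rw [bdry_iff]; decide⟩

theorem int10 : IsInteriorVertex exComplex 10 :=
  ⟨(mem_faces_iff _).mpr (by decide), by rw [bdry_iff]; decide⟩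

theorem h9IG : ({9} : Finset ℕ) ∈ (interiorGraph exComplex).faces := by
  refine ⟨(mem_faces_iff _).mpr (by decide), by decide, ?_⟩
  intro v hv; rw [Finset.mem_singleton] at hv; subst hv; exact int9

theorem h910IG : ({9, 10} : Finset ℕ) ∈ (interiorGraph exComplex).faces := by
  refine ⟨(mem_faces_iff _).mpr (by decide), by decide, ?_⟩
  intro v hv
  have hv' : v = 9 ∨ v = 10 := by simpa using hv
  rcases hv' with rfl | rfl
  · exact int9
  · exact int10

/-- The unique maximal interior graph component. -/
def Ic : SComplex ℕ := componentOf (interiorGraph exComplex) 9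

/-- The complex `∂B ∩ Star_B I` for the unique interior component `I`. -/
def Kc : SComplex ℕ := interC (boundaryC 3 exComplex) (starC exComplex Ic)

theorem h9I : ({9} : Finset ℕ) ∈ Ic.faces := by
  refine ⟨h9IG, ?_⟩
  intro u hu; rw [Finset.mem_singleton] at hu; subst hu
  exact Relation.ReflTransGen.refl

theorem h10I : ({10} : Finset ℕ) ∈ Ic.faces := by
  refine ⟨⟨(mem_faces_iff _).mpr (by decide), by decide, ?_⟩, ?_⟩
  · intro v hv; rw [Finset.mem_singleton] at hv; subst hv; exact int10
  · intro u hu; rw [Finset.mem_singleton] at hu; subst hu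
    exact Relation.ReflTransGen.single h910IG

theorem mem_Kc {t : Finset ℕ} (F G : Finset ℕ) (w : ℕ)
    (hF : F ∈ bdryTris) (htF : t ⊆ F) (hG : G ∈ exFacets) (htG : t ⊆ G)
    (hw : w ∈ G) (hwI : ({w} : Finset ℕ) ∈ Ic.faces) (hne : t.Nonempty) :
    t ∈ Kc.faces := by
  refine ⟨(bdry_iff t).mpr ⟨hne, F, hF, htF⟩, ⟨hne, G, hG, htG⟩,
    G, ⟨⟨w, hw⟩, G, hG, Finset.Subset.refl G⟩, htG, w, hw, hwI⟩

theorem key (a m b : ℕ)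
    (ha : ({a} : Finset ℕ) ∈ Kc.faces) (hb : ({b} : Finset ℕ) ∈ Kc.faces)
    (h1 : ({a, m} : Finset ℕ) ∈ Kc.faces) (h2 : ({m, b} : Finset ℕ) ∈ Kc.faces) :
    ∃! C, IsComponentOf Kc C ∧ ∀ v ∈ ({a, b} : Finset ℕ), ({v} : Finset ℕ) ∈ C.faces := by
  refine ⟨componentOf Kc a, ⟨⟨a, ha, rfl⟩, ?_⟩, ?_⟩
  · intro v hv
    have hv' : v = a ∨ v = b := by simpa using hv
    rcases hv' with rfl | rfl
    · exact ⟨ha, fun u hu => by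
        rw [Finset.mem_singleton] at hu; subst hu; exact Relation.ReflTransGen.refl⟩
    · refine ⟨hb, fun u hu => ?_⟩
      rw [Finset.mem_singleton] at hu; subst hu
      exact Relation.ReflTransGen.tail (Relation.ReflTransGen.single h1) h2
  · rintro C ⟨⟨w, hw, rfl⟩, hC⟩
    have hra : Reach Kc w a :=
      (hC a (Finset.mem_insert_self a {b})).2 a (Finset.mem_singleton_self a)
    exact componentOf_congr hra

theorem notstrict (a m b : ℕ)
    (ha : ({a} : Finset ℕ) ∈ Kc.faces) (hb : ({b} : Finset ℕ) ∈ Kc.faces)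
    (h1 : ({a, m} : Finset ℕ) ∈ Kc.faces) (h2 : ({m, b} : Finset ℕ) ∈ Kc.faces) :
    ¬ IsStrictSpanningEdge exComplex {a, b} :=
  fun h => h.2 ⟨Ic, ⟨9, h9IG, rfl⟩, key a m b ha hb h1 h2⟩

theorem span12 : IsSpanningEdge exComplex {1, 2} := by
  refine ⟨(mem_faces_iff _).mpr (by decide), by decide, by rw [bdry_iff]; decide, ?_⟩
  have D : ∀ v ∈ ({1, 2} : Finset ℕ),
      ({v} : Finset ℕ).Nonempty ∧ ∃ s ∈ bdryTris, ({v} : Finset ℕ) ⊆ s := by decide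
  intro v hv; rw [bdry_iff]; exact D v hv

theorem span36 : IsSpanningEdge exComplex {3, 6} := by
  refine ⟨(mem_faces_iff _).mpr (by decide), by decide, by rw [bdry_iff]; decide, ?_⟩
  have D : ∀ v ∈ ({3, 6} : Finset ℕ),
      ({v} : Finset ℕ).Nonempty ∧ ∃ s ∈ bdryTris, ({v} : Finset ℕ) ⊆ s := by decide
  intro v hv; rw [bdry_iff]; exact D v hv

theorem span47 : IsSpanningEdge exComplex {4, 7} := by
  refine ⟨(mem_faces_iff _).mpr (by decide), by decide, by rw [bdry_iff]; decide, ?_⟩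
  have D : ∀ v ∈ ({4, 7} : Finset ℕ),
      ({v} : Finset ℕ).Nonempty ∧ ∃ s ∈ bdryTris, ({v} : Finset ℕ) ⊆ s := by decide
  intro v hv; rw [bdry_iff]; exact D v hv

theorem span58 : IsSpanningEdge exComplex {5, 8} := by
  refine ⟨(mem_faces_iff _).mpr (by decide), by decide, by rw [bdry_iff]; decide, ?_⟩
  have D : ∀ v ∈ ({5, 8} : Finset ℕ),
      ({v} : Finset ℕ).Nonempty ∧ ∃ s ∈ bdryTris, ({v} : Finset ℕ) ⊆ s := by decide
  intro v hv; rw [bdry_iff]; exact D v hv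

theorem strict12 : IsStrictSpanningEdge exComplex {1, 2} := by
  refine ⟨span12, ?_⟩
  rintro ⟨I, ⟨v, hvIG, rfl⟩, hEU⟩
  obtain ⟨C, ⟨⟨w, hw, rfl⟩, hCv⟩, -⟩ := hEU
  have h1 : ({1} : Finset ℕ) ∈
      (componentOf (interC (boundaryC 3 exComplex)
        (starC exComplex (componentOf (interiorGraph exComplex) v))) w).faces :=
    hCv 1 (by decide)
  obtain ⟨-, s, hsB, h1s, u, hus, huI⟩ := h1.1.2
  have huint : IsInteriorVertex exComplex u := huI.1.2.2 u (Finset.mem_singleton_self u)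
  have hu9 := intVert_mem huint
  obtain ⟨-, G, hG, hsG⟩ := hsB
  have h1G : (1 : ℕ) ∈ G := hsG (h1s (Finset.mem_singleton_self 1))
  have huG : u ∈ G := hsG hus
  have D : ∀ G ∈ exFacets, (1 : ℕ) ∈ G → ¬(9 ∈ G ∨ 10 ∈ G ∨ 11 ∈ G) := by decide
  refine D G hG h1G ?_
  rcases hu9 with rfl | rfl | rfl
  · exact Or.inl huG
  · exact Or.inr (Or.inl huG)
  · exact Or.inr (Or.inr huG)

end Aux

/-- In Example 3.2, the edge {1,2} is a strict spanning edge, while {3,6}, {4,7}, {5,8} are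
spanning edges which are not strict. -/
theorem exComplex_spanning_edges :
    IsStrictSpanningEdge exComplex {1, 2} ∧
    (IsSpanningEdge exComplex {3, 6} ∧ ¬ IsStrictSpanningEdge exComplex {3, 6}) ∧
    (IsSpanningEdge exComplex {4, 7} ∧ ¬ IsStrictSpanningEdge exComplex {4, 7}) ∧
    (IsSpanningEdge exComplex {5, 8} ∧ ¬ IsStrictSpanningEdge exComplex {5, 8}) := by
  refine ⟨strict12,
    ⟨span36, notstrict 3 12 6
      (mem_Kc {1,3,4} {3,6,9,10} 9 (by decide) (by decide) (by decide) (by decide) (by decide) h9I (by decide))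
      (mem_Kc {2,6,7} {3,6,9,10} 9 (by decide) (by decide) (by decide) (by decide) (by decide) h9I (by decide))
      (mem_Kc {3,5,12} {3,9,10,12} 9 (by decide) (by decide) (by decide) (by decide) (by decide) h9I (by decide))
      (mem_Kc {6,12,13} {6,9,10,12} 9 (by decide) (by decide) (by decide) (by decide) (by decide) h9I (by decide))⟩,
    ⟨span47, notstrict 4 13 7
      (mem_Kc {1,3,4} {4,7,10,11} 10 (by decide) (by decide) (by decide) (by decide) (by decide) h10I (by decide))
      (mem_Kc {2,6,7} {7,10,11,13} 10 (by decide) (by decide) (by decide) (by decide) (by decide) h10I (by decide))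
      (mem_Kc {3,4,13} {4,10,11,13} 10 (by decide) (by decide) (by decide) (by decide) (by decide) h10I (by decide))
      (mem_Kc {6,7,13} {7,10,11,13} 10 (by decide) (by decide) (by decide) (by decide) (by decide) h10I (by decide))⟩,
    ⟨span58, notstrict 5 12 8
      (mem_Kc {1,3,5} {5,8,9,11} 9 (by decide) (by decide) (by decide) (by decide) (by decide) h9I (by decide))
      (mem_Kc {2,6,8} {5,8,9,11} 9 (by decide) (by decide) (by decide) (by decide) (by decide) h9I (by decide))
      (mem_Kc {3,5,12} {5,9,12,14} 9 (by decide) (by decide) (by decide) (by decide) (by decide) h9I (by decide))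
      (mem_Kc {6,8,12} {8,9,12,14} 9 (by decide) (by decide) (by decide) (by decide) (by decide) h9I (by decide))⟩⟩
end SCPaper
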